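/- Let Γ be smooth torsion-free connection coefficients on an open set U ⊆ ℝⁿ (n ≥ 2), let X : I → U be a geodesic, let s₀ ∈ I and p = X(s₀), and let ξ : I → ℝⁿ be a generalized Jacobi field along X. Let φ : U → Ũ be a smooth diffeomorphism onto an open set Ũ ⊆ ℝⁿ all of whose second partial derivatives vanish at p, i.e., (∂²φ^μ/∂x^ν∂x^σ)(p) = 0 for all μ,ν,σ, and let Γ̃ be the transformed connection coefficients on Ũ. Set ξ̃(s) = Dφ(X(s)) ξ(s) and let G̃ denote the generalized Jacobi operator formed from Γ̃ along φ∘X. Then for every μ, G̃^μ[ξ̃](s₀) = − (∂³φ^μ/∂x^τ∂x^ρ∂x^σ)(p) · ξ^τ(s₀) (2 Ẋ^ρ(s₀) + ξ̇^ρ(s₀)) ξ̇^σ(s₀) (summation over τ,ρ,σ). -/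

import Mathlib

open Set ContDiff

noncomputable section

/-- The partial derivative of `f` in the `μ`-th coordinate direction at `x`. -/
def pd {n : ℕ} (μ : Fin n) (f : (Fin n → ℝ) → ℝ) (x : Fin n → ℝ) : ℝ :=
  fderiv ℝ f x (Pi.single μ 1)

/-- `Γ` is a family of smooth, torsion-free connection coefficients on `U`:
`Γ x μ ν σ` stands for `Γ^μ_{νσ}(x)`. -/
def IsConnCoeff {n : ℕ} (U : Set (Fin n → ℝ))
    (Γ : (Fin n → ℝ) → Fin n → Fin n → Fin n → ℝ) : Prop :=
  (∀ μ ν σ : Fin n, ContDiffOn ℝ ∞ (fun x => Γ x μ ν σ) U) ∧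
  (∀ x ∈ U, ∀ μ ν σ : Fin n, Γ x μ ν σ = Γ x μ σ ν)

/-- `X` is an affinely parametrized geodesic of `Γ` on the interval `I`. -/
def IsGeodesic {n : ℕ} (Γ : (Fin n → ℝ) → Fin n → Fin n → Fin n → ℝ)
    (I : Set ℝ) (X : ℝ → Fin n → ℝ) : Prop :=
  ∀ s ∈ I, ∀ μ : Fin n,
    deriv (deriv (fun t => X t μ)) s
      + ∑ ν, ∑ σ, Γ (X s) μ ν σ * deriv (fun t => X t ν) s * deriv (fun t => X t σ) s = 0

/-- The generalized Jacobi operator `G^μ[ξ](s)` along the curve `X` for the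
connection coefficients `Γ`. -/
def genJacobiOp {n : ℕ} (Γ : (Fin n → ℝ) → Fin n → Fin n → Fin n → ℝ)
    (X ξ : ℝ → Fin n → ℝ) (μ : Fin n) (s : ℝ) : ℝ :=
  deriv (deriv (fun t => ξ t μ)) s
    + (∑ ν, ∑ σ, Γ (X s) μ ν σ *
        (2 * deriv (fun t => ξ t ν) s * deriv (fun t => X t σ) s
          + deriv (fun t => ξ t ν) s * deriv (fun t => ξ t σ) s))
    + ∑ ν, ∑ σ, ∑ α, pd α (fun x => Γ x μ ν σ) (X s) * ξ s α *
        (deriv (fun t => X t ν) s + deriv (fun t => ξ t ν) s) *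
        (deriv (fun t => X t σ) s + deriv (fun t => ξ t σ) s)

/-- `ξ` is a generalized Jacobi field along `X` on the interval `I`. -/
def IsGenJacobiField {n : ℕ} (Γ : (Fin n → ℝ) → Fin n → Fin n → Fin n → ℝ)
    (I : Set ℝ) (X ξ : ℝ → Fin n → ℝ) : Prop :=
  ∀ s ∈ I, ∀ μ : Fin n, genJacobiOp Γ X ξ μ s = 0

/-- `Γt` represents the transformed connection coefficients of `Γ` under the
coordinate change `φ`:
`(∂φ^λ/∂x^α) Γ^α_{νσ} = Γt^λ_{αβ}(φ x) (∂φ^α/∂x^ν)(∂φ^β/∂x^σ) + ∂²φ^λ/∂x^ν∂x^σ` on `U`. -/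
def TransformedConn {n : ℕ} (U : Set (Fin n → ℝ)) (φ : (Fin n → ℝ) → Fin n → ℝ)
    (Γ Γt : (Fin n → ℝ) → Fin n → Fin n → Fin n → ℝ) : Prop :=
  ∀ x ∈ U, ∀ lam ν σ : Fin n,
    ∑ α, pd α (fun y => φ y lam) x * Γ x α ν σ
      = (∑ α, ∑ β, Γt (φ x) lam α β * pd ν (fun y => φ y α) x * pd σ (fun y => φ y β) x)
        + pd ν (fun y => pd σ (fun z => φ z lam) y) x

/-- `φ` is a smooth diffeomorphism from the open set `U` onto the open set `φ '' U`. -/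
def IsDiffeoOn {n : ℕ} (φ : (Fin n → ℝ) → Fin n → ℝ) (U : Set (Fin n → ℝ)) : Prop :=
  ContDiffOn ℝ ∞ φ U ∧ IsOpen (φ '' U) ∧
    ∃ ψ : (Fin n → ℝ) → Fin n → ℝ, ContDiffOn ℝ ∞ ψ (φ '' U) ∧
      (∀ x ∈ U, ψ (φ x) = x) ∧ ∀ y ∈ φ '' U, ψ y ∈ U

/-!
At `p = X s₀` the Hessian of `φ` vanishes, so the transformation law of the connection reads
`Jᵀ Γ̃^μ J = J^μ_c Γ^c` with `J = Dφ(p)`, and differentiating it once gives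
`Jᵀ ∂_τ(Γ̃^μ ∘ φ) J = J^μ_c ∂_τ Γ^c - ∂_τ ∂²φ^μ`. For the same reason `ξ̃ = J ξ` is transported
tensorially to first order, while `ξ̃''` acquires `∂³φ(ξ, Ẋ, Ẋ)`. Adding up, the generalized
Jacobi operator transforms as `G̃^μ = J^μ_c G^c + ∂³φ^μ(ξ; Ẋ, Ẋ) - ∂³φ^μ(ξ; Ẋ + ξ̇, Ẋ + ξ̇)`;
with `G = 0` and `∂³φ` symmetric the remainder is `-∂³φ^μ(ξ; 2Ẋ + ξ̇, ξ̇)`.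
`Γ̃` is differentiable because on `φ '' U` it equals `(Dψ)ᵀ (J Γ - ∂²φ)(ψ y) Dψ`, where `ψ` is
the inverse of `φ`.
-/

open Filter Topology Matrix

theorem dotProduct_mulVec_eq_sum_sum {m R : Type*} [Fintype m] [CommSemiring R]
    (M : Matrix m m R) (a b : m → R) :
    a ⬝ᵥ (M *ᵥ b) = ∑ ν, ∑ σ, M ν σ * a ν * b σ := by
  simp [dotProduct, mulVec, Finset.mul_sum, mul_assoc, mul_left_comm]

theorem mulVec_dotProduct_mulVec_mulVec {m k R : Type*} [Fintype m] [Fintype k] [CommSemiring R]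
    (A : Matrix m m R) (J : Matrix m k R) (a b : k → R) :
    (J *ᵥ a) ⬝ᵥ (A *ᵥ (J *ᵥ b)) = a ⬝ᵥ ((Jᵀ * A * J) *ᵥ b) := by
  rw [Matrix.mul_assoc, ← mulVec_mulVec, ← mulVec_mulVec, dotProduct_mulVec a Jᵀ, vecMul_transpose]

theorem Matrix.IsSymm.dotProduct_mulVec_sub_add {m R : Type*} [Fintype m] [CommRing R]
    {M : Matrix m m R} (hM : M.IsSymm) (v w : m → R) :
    v ⬝ᵥ (M *ᵥ v) - (v + w) ⬝ᵥ (M *ᵥ (v + w)) = -((2 • v + w) ⬝ᵥ (M *ᵥ w)) := by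
  have hcomm : w ⬝ᵥ (M *ᵥ v) = v ⬝ᵥ (M *ᵥ w) := by
    rw [dotProduct_mulVec, ← mulVec_transpose, hM.eq, dotProduct_comm]
  simp only [mulVec_add, dotProduct_add, add_dotProduct, smul_dotProduct, hcomm]
  ring

section

variable {n : ℕ}

theorem fderiv_apply_eq_sum_pd (f : (Fin n → ℝ) → ℝ) (x v : Fin n → ℝ) :
    fderiv ℝ f x v = ∑ i, pd i f x * v i := by
  conv_lhs => rw [pi_eq_sum_univ' v]
  simp [pd, mul_comm]

theorem Filter.EventuallyEq.pd_eq {f g : (Fin n → ℝ) → ℝ} {x : Fin n → ℝ} (h : f =ᶠ[𝓝 x] g)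
    (i : Fin n) : pd i f x = pd i g x := by
  rw [pd, pd, h.fderiv_eq]

theorem pd_coord (i j : Fin n) (x : Fin n → ℝ) :
    pd i (fun y => y j) x = (1 : Matrix (Fin n) (Fin n) ℝ) j i := by
  simp [pd, (hasFDerivAt_apply j x).fderiv, one_apply, Pi.single_apply]

theorem pd_mul {f g : (Fin n → ℝ) → ℝ} {x : Fin n → ℝ} (hf : DifferentiableAt ℝ f x)
    (hg : DifferentiableAt ℝ g x) (i : Fin n) :
    pd i (fun y => f y * g y) x = pd i f x * g x + f x * pd i g x := by
  simp [pd, fderiv_fun_mul hf hg]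
  ring

theorem pd_sub {f g : (Fin n → ℝ) → ℝ} {x : Fin n → ℝ} (hf : DifferentiableAt ℝ f x)
    (hg : DifferentiableAt ℝ g x) (i : Fin n) :
    pd i (fun y => f y - g y) x = pd i f x - pd i g x := by
  simp [pd, fderiv_fun_sub hf hg]

theorem pd_sum {ι : Type*} (s : Finset ι) {F : ι → (Fin n → ℝ) → ℝ} {x : Fin n → ℝ}
    (hF : ∀ j ∈ s, DifferentiableAt ℝ (F j) x) (i : Fin n) :
    pd i (fun y => ∑ j ∈ s, F j y) x = ∑ j ∈ s, pd i (F j) x := by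
  simp [pd, fderiv_fun_sum hF]

theorem pd_comp {f : (Fin n → ℝ) → ℝ} {φ : (Fin n → ℝ) → Fin n → ℝ} {x : Fin n → ℝ}
    (hf : DifferentiableAt ℝ f (φ x)) (hφ : DifferentiableAt ℝ φ x) (i : Fin n) :
    pd i (fun y => f (φ y)) x = ∑ γ, pd γ f (φ x) * pd i (fun y => φ y γ) x := by
  rw [pd, fderiv_fun_comp x hf hφ, ContinuousLinearMap.comp_apply, fderiv_apply_eq_sum_pd]
  simp [pd, fderiv_apply hφ]

theorem ContDiffOn.contDiffOn_pd {f : (Fin n → ℝ) → ℝ} {U : Set (Fin n → ℝ)}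
    (hf : ContDiffOn ℝ ∞ f U) (hU : IsOpen U) (i : Fin n) : ContDiffOn ℝ ∞ (pd i f) U :=
  (hf.fderiv_of_isOpen hU le_rfl).clm_apply contDiffOn_const

theorem ContDiffAt.pd_pd_comm {f : (Fin n → ℝ) → ℝ} {x : Fin n → ℝ} (hf : ContDiffAt ℝ 2 f x)
    (i j : Fin n) : pd i (pd j f) x = pd j (pd i f) x := by
  have hd : DifferentiableAt ℝ (fderiv ℝ f) x :=
    (hf.fderiv_right (m := 1) le_rfl).differentiableAt one_ne_zero
  have key : ∀ a b : Fin n,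
      pd a (pd b f) x = fderiv ℝ (fderiv ℝ f) x (Pi.single a 1) (Pi.single b 1) := by
    intro a b
    change fderiv ℝ (fun y => fderiv ℝ f y (Pi.single b 1)) x (Pi.single a 1) = _
    simp [fderiv_clm_apply hd (differentiableAt_const _)]
  rw [key, key, hf.isSymmSndFDerivAt (by simp)]

def jac (φ : (Fin n → ℝ) → Fin n → ℝ) (x : Fin n → ℝ) : Matrix (Fin n) (Fin n) ℝ :=
  of fun ν a => pd a (fun y => φ y ν) x

def hess (f : (Fin n → ℝ) → ℝ) (x : Fin n → ℝ) : Matrix (Fin n) (Fin n) ℝ :=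
  of fun ν σ => pd ν (pd σ f) x

def pdMat (i : Fin n) (M : (Fin n → ℝ) → Matrix (Fin n) (Fin n) ℝ) (x : Fin n → ℝ) :
    Matrix (Fin n) (Fin n) ℝ :=
  of fun ν σ => pd i (fun y => M y ν σ) x

theorem ContDiffAt.isSymm_hess {f : (Fin n → ℝ) → ℝ} {x : Fin n → ℝ} (hf : ContDiffAt ℝ 2 f x) :
    (hess f x).IsSymm :=
  IsSymm.ext fun ν σ => hf.pd_pd_comm σ ν

section SmoothOnOpen

variable {f : (Fin n → ℝ) → ℝ} {U : Set (Fin n → ℝ)} {x : Fin n → ℝ}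

theorem ContDiffOn.contDiffAt_two (hf : ContDiffOn ℝ ∞ f U) (hU : IsOpen U) (hx : x ∈ U) :
    ContDiffAt ℝ 2 f x :=
  (hf.contDiffAt (hU.mem_nhds hx)).of_le (by norm_cast)

theorem ContDiffOn.hess_pd (hf : ContDiffOn ℝ ∞ f U) (hU : IsOpen U) (hx : x ∈ U) (i : Fin n) :
    hess (pd i f) x = pdMat i (hess f) x := by
  ext ν σ
  have hswap : pd σ (pd i f) =ᶠ[𝓝 x] pd i (pd σ f) := by
    filter_upwards [hU.mem_nhds hx] with y hy
    exact (hf.contDiffAt_two hU hy).pd_pd_comm σ i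
  exact (hswap.pd_eq ν).trans (((hf.contDiffOn_pd hU σ).contDiffAt_two hU hx).pd_pd_comm ν i)

theorem ContDiffOn.isSymm_pdMat_hess (hf : ContDiffOn ℝ ∞ f U) (hU : IsOpen U) (hx : x ∈ U)
    (i : Fin n) : (pdMat i (hess f) x).IsSymm := by
  rw [← hf.hess_pd hU hx]
  exact ((hf.contDiffOn_pd hU i).contDiffAt_two hU hx).isSymm_hess

end SmoothOnOpen

theorem fderiv_pd_eq_zero_of_hess_eq_zero {f : (Fin n → ℝ) → ℝ} {x : Fin n → ℝ}
    (hf : hess f x = 0) (i : Fin n) : fderiv ℝ (pd i f) x = 0 := by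
  have hpd : ∀ j, pd j (pd i f) x = 0 := fun j => congrFun (congrFun hf j) i
  ext v
  simp [fderiv_apply_eq_sum_pd, hpd]

theorem jac_mul_jac_eq_one {φ ψ : (Fin n → ℝ) → Fin n → ℝ} {x : Fin n → ℝ}
    (hψ : DifferentiableAt ℝ ψ (φ x)) (hφ : DifferentiableAt ℝ φ x)
    (hψφ : (fun y => ψ (φ y)) =ᶠ[𝓝 x] id) : jac ψ (φ x) * jac φ x = 1 := by
  ext a b
  rw [mul_apply]
  have hcoord : (fun y => ψ (φ y) a) =ᶠ[𝓝 x] fun y => y a := hψφ.fun_comp (· a)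
  rw [← pd_coord, ← hcoord.pd_eq, pd_comp (f := fun z => ψ z a) (by fun_prop) hφ]
  rfl

theorem sum_jac_mulVec_smul_pdMat {M : (Fin n → ℝ) → Matrix (Fin n) (Fin n) ℝ}
    {φ : (Fin n → ℝ) → Fin n → ℝ} {x : Fin n → ℝ}
    (hM : ∀ a b, DifferentiableAt ℝ (fun y => M y a b) (φ x)) (hφ : DifferentiableAt ℝ φ x)
    (v : Fin n → ℝ) :
    ∑ α, (jac φ x *ᵥ v) α • pdMat α M (φ x) = ∑ τ, v τ • pdMat τ (fun y => M (φ y)) x := by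
  ext a b
  simp only [Matrix.sum_apply, Matrix.smul_apply, pdMat, of_apply, smul_eq_mul,
    pd_comp (f := fun z => M z a b) (hM a b) hφ, mulVec, dotProduct, jac, Finset.sum_mul,
    Finset.mul_sum]
  rw [Finset.sum_comm]
  exact Finset.sum_congr rfl fun _ _ => Finset.sum_congr rfl fun _ _ => by ring

theorem pdMat_transpose_mul_mul_of_pdMat_eq_zero {A G : (Fin n → ℝ) → Matrix (Fin n) (Fin n) ℝ}
    {x : Fin n → ℝ} (hA : ∀ a b, DifferentiableAt ℝ (fun y => A y a b) x)
    (hG : ∀ a b, DifferentiableAt ℝ (fun y => G y a b) x) {τ : Fin n} (hA0 : pdMat τ A x = 0) :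
    pdMat τ (fun y => (A y)ᵀ * G y * A y) x = (A x)ᵀ * pdMat τ G x * A x := by
  have hA0' : ∀ a b, pd τ (fun y => A y a b) x = 0 := fun a b => congrFun (congrFun hA0 a) b
  ext ν σ
  simp only [pdMat, of_apply, mul_apply, transpose_apply]
  simp (disch := fun_prop) only [pd_sum, pd_mul, hA0']
  simp

section TransformedConn

variable {U : Set (Fin n → ℝ)} {φ : (Fin n → ℝ) → Fin n → ℝ}
  {Γ Γt : (Fin n → ℝ) → Fin n → Fin n → Fin n → ℝ}

theorem TransformedConn.jac_transpose_mul_mul_jac (h : TransformedConn U φ Γ Γt)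
    {x : Fin n → ℝ} (hx : x ∈ U) (μ : Fin n) :
    (jac φ x)ᵀ * of (Γt (φ x) μ) * jac φ x
      = ∑ c, jac φ x μ c • of (Γ x c) - hess (fun y => φ y μ) x := by
  ext ν σ
  simp only [mul_apply, transpose_apply, Matrix.sub_apply, Matrix.sum_apply, Matrix.smul_apply,
    of_apply, jac, hess, smul_eq_mul, Finset.sum_mul]
  rw [h x hx μ ν σ, add_sub_cancel_right, Finset.sum_comm]
  exact Finset.sum_congr rfl fun _ _ => Finset.sum_congr rfl fun _ _ => by ring

theorem TransformedConn.contDiffOn (h : TransformedConn U φ Γ Γt) (hU : IsOpen U)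
    (hΓ : ∀ μ ν σ, ContDiffOn ℝ ∞ (fun x => Γ x μ ν σ) U) (hφ : IsDiffeoOn φ U)
    (μ ν σ : Fin n) : ContDiffOn ℝ ∞ (fun y => Γt y μ ν σ) (φ '' U) := by
  obtain ⟨hφ, hV, ψ, hψ, hψφ, hψU⟩ := hφ
  set L : (Fin n → ℝ) → Matrix (Fin n) (Fin n) ℝ :=
    fun x => ∑ c, jac φ x μ c • of (Γ x c) - hess (fun y => φ y μ) x
  have hrep : ∀ y ∈ φ '' U, ((jac ψ y)ᵀ * L (ψ y) * jac ψ y) ν σ = Γt y μ ν σ := by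
    rintro _ ⟨x, hx, rfl⟩
    have hJK : jac φ x * jac ψ (φ x) = 1 := by
      refine mul_eq_one_comm.mp (jac_mul_jac_eq_one ?_ ?_ ?_)
      · exact (hψ.contDiffAt (hV.mem_nhds ⟨x, hx, rfl⟩)).differentiableAt (by simp)
      · exact (hφ.contDiffAt (hU.mem_nhds hx)).differentiableAt (by simp)
      · filter_upwards [hU.mem_nhds hx] with y hy using hψφ y hy
    have hLx : L x = (jac φ x)ᵀ * of (Γt (φ x) μ) * jac φ x :=
      (h.jac_transpose_mul_mul_jac hx μ).symm
    rw [hψφ x hx, hLx, ← Matrix.mul_assoc, ← Matrix.mul_assoc,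
      Matrix.mul_assoc _ _ (jac ψ (φ x)), ← transpose_mul, hJK]
    simp
  refine ContDiffOn.congr ?_ fun y hy => (hrep y hy).symm
  have hφc : ∀ ν, ContDiffOn ℝ ∞ (fun y => φ y ν) U := contDiffOn_pi.mp hφ
  have hK : ∀ a b, ContDiffOn ℝ ∞ (fun y => jac ψ y a b) (φ '' U) := fun a b =>
    (contDiffOn_pi.mp hψ a).contDiffOn_pd hV b
  have hL : ∀ a b, ContDiffOn ℝ ∞ (fun x => L x a b) U := by
    intro a b
    simp only [L, Matrix.sub_apply, Matrix.sum_apply, Matrix.smul_apply, of_apply, hess,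
      smul_eq_mul]
    exact (ContDiffOn.sum fun c _ => ((hφc μ).contDiffOn_pd hU c).mul (hΓ c a b)).sub
      ((((hφc μ).contDiffOn_pd hU b).contDiffOn_pd hU a))
  have hLψ : ∀ a b, ContDiffOn ℝ ∞ (fun y => L (ψ y) a b) (φ '' U) := fun a b =>
    (hL a b).comp hψ hψU
  simp only [mul_apply, transpose_apply]
  exact ContDiffOn.sum fun b _ => (ContDiffOn.sum fun a _ => (hK a ν).mul (hLψ a b)).mul (hK b σ)

theorem TransformedConn.jac_transpose_mul_pdMat_mul_jac (h : TransformedConn U φ Γ Γt)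
    (hU : IsOpen U) (hΓ : ∀ μ ν σ, ContDiffOn ℝ ∞ (fun x => Γ x μ ν σ) U)
    (hφ : ContDiffOn ℝ ∞ φ U) {x : Fin n → ℝ} (hx : x ∈ U) (μ : Fin n)
    (hΓt : ∀ ν σ, DifferentiableAt ℝ (fun y => Γt (φ y) μ ν σ) x)
    (hH : ∀ κ, hess (fun y => φ y κ) x = 0) (τ : Fin n) :
    (jac φ x)ᵀ * pdMat τ (fun y => of (Γt (φ y) μ)) x * jac φ x
      = ∑ c, jac φ x μ c • pdMat τ (fun y => of (Γ y c)) x - pdMat τ (hess fun y => φ y μ) x := by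
  have hsmooth : ∀ {g : (Fin n → ℝ) → ℝ}, ContDiffOn ℝ ∞ g U → DifferentiableAt ℝ g x :=
    fun hg => (hg.contDiffAt (hU.mem_nhds hx)).differentiableAt (by simp)
  have hφc : ∀ κ, ContDiffOn ℝ ∞ (fun y => φ y κ) U := contDiffOn_pi.mp hφ
  have hJ : ∀ a b, DifferentiableAt ℝ (fun y => jac φ y a b) x := fun a b =>
    hsmooth ((hφc a).contDiffOn_pd hU b)
  -- `hHd` and `hΓd` are the side conditions that `fun_prop` discharges in the last `simp`.
  have hHd : ∀ a b, DifferentiableAt ℝ (fun y => hess (fun z => φ z μ) y a b) x := fun a b =>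
    hsmooth (((hφc μ).contDiffOn_pd hU b).contDiffOn_pd hU a)
  have hΓd : ∀ c a b, DifferentiableAt ℝ (fun y => Γ y c a b) x := fun c a b => hsmooth (hΓ c a b)
  have hJ0 : pdMat τ (jac φ) x = 0 := by ext a b; exact congrFun (congrFun (hH a) τ) b
  have hlaw : (fun y => (jac φ y)ᵀ * of (Γt (φ y) μ) * jac φ y)
      =ᶠ[𝓝 x] fun y => ∑ c, jac φ y μ c • of (Γ y c) - hess (fun z => φ z μ) y := by
    filter_upwards [hU.mem_nhds hx] with y hy using h.jac_transpose_mul_mul_jac hy μ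
  rw [← pdMat_transpose_mul_mul_of_pdMat_eq_zero (G := fun y => of (Γt (φ y) μ)) hJ hΓt hJ0]
  ext ν σ
  have hJ0' : ∀ a b, pd τ (fun y => jac φ y a b) x = 0 := fun a b => congrFun (congrFun hJ0 a) b
  have hpd := (hlaw.fun_comp (· ν σ)).pd_eq τ
  simp only [Function.comp_def] at hpd
  simp only [pdMat, of_apply, hpd]
  simp (disch := fun_prop) only [Matrix.sub_apply, Matrix.sum_apply,
    Matrix.smul_apply, of_apply, smul_eq_mul, pd_sum, pd_mul, pd_sub, hJ0']
  simp

end TransformedConn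

theorem hasDerivAt_deriv_mul {f g : ℝ → ℝ} {s f₂ g₂ : ℝ}
    (hf : ∀ᶠ t in 𝓝 s, DifferentiableAt ℝ f t) (hg : ∀ᶠ t in 𝓝 s, DifferentiableAt ℝ g t)
    (hf₂ : HasDerivAt (deriv f) f₂ s) (hg₂ : HasDerivAt (deriv g) g₂ s) :
    HasDerivAt (deriv fun t => f t * g t)
      (f₂ * g s + 2 * (deriv f s * deriv g s) + f s * g₂) s := by
  have hprod : deriv (fun t => f t * g t) =ᶠ[𝓝 s] fun t => deriv f t * g t + f t * deriv g t := by
    filter_upwards [hf, hg] with t hft hgt using deriv_fun_mul hft hgt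
  refine HasDerivAt.congr_of_eventuallyEq ?_ hprod
  convert (hf₂.fun_mul hg.self_of_nhds.hasDerivAt).fun_add
    (hf.self_of_nhds.hasDerivAt.fun_mul hg₂) using 1
  ring

-- Componentwise, as in `genJacobiOp`: it agrees with `deriv X s` only where `X` is differentiable.
def velocity (X : ℝ → Fin n → ℝ) (s : ℝ) : Fin n → ℝ :=
  fun ν => deriv (fun t => X t ν) s

section Curve

variable {X : ℝ → Fin n → ℝ} {s : ℝ}

theorem hasDerivAt_comp_velocity {f : (Fin n → ℝ) → ℝ} (hf : DifferentiableAt ℝ f (X s))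
    (hX : DifferentiableAt ℝ X s) :
    HasDerivAt (fun t => f (X t)) (fderiv ℝ f (X s) (velocity X s)) s := by
  have hcomp := hf.hasFDerivAt.comp_hasDerivAt s hX.hasDerivAt
  rwa [deriv_pi (φ := X) fun ν => by fun_prop] at hcomp

theorem velocity_comp {φ : (Fin n → ℝ) → Fin n → ℝ} (hφ : DifferentiableAt ℝ φ (X s))
    (hX : DifferentiableAt ℝ X s) :
    velocity (fun t => φ (X t)) s = jac φ (X s) *ᵥ velocity X s := by
  funext ν
  rw [velocity, (hasDerivAt_comp_velocity (f := fun y => φ y ν) (by fun_prop) hX).deriv,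
    fderiv_apply_eq_sum_pd]
  rfl

variable {U : Set (Fin n → ℝ)} {I : Set ℝ}

theorem hasDerivAt_deriv_comp {f : (Fin n → ℝ) → ℝ} (hf : ContDiffOn ℝ ∞ f U) (hU : IsOpen U)
    (hX : ContDiffOn ℝ ∞ X I) (hI : IsOpen I) (hXU : ∀ t ∈ I, X t ∈ U) (hs : s ∈ I) :
    HasDerivAt (deriv fun t => f (X t))
      (velocity X s ⬝ᵥ (hess f (X s) *ᵥ velocity X s)
        + fderiv ℝ f (X s) (velocity (velocity X) s)) s := by
  have hfd : ∀ {g : (Fin n → ℝ) → ℝ}, ContDiffOn ℝ ∞ g U → ∀ t ∈ I, DifferentiableAt ℝ g (X t) :=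
    fun hg t ht => (hg.contDiffAt (hU.mem_nhds (hXU t ht))).differentiableAt (by simp)
  have hXd : ∀ t ∈ I, DifferentiableAt ℝ X t :=
    fun t ht => (hX.contDiffAt (hI.mem_nhds ht)).differentiableAt (by simp)
  have hv : ∀ a, HasDerivAt (fun t => velocity X t a) (velocity (velocity X) s a) s := fun a =>
    ((((contDiffOn_pi.mp hX a).deriv_of_isOpen (m := 1) hI (by norm_cast)).contDiffAt
      (hI.mem_nhds hs)).differentiableAt (by simp)).hasDerivAt
  have hderiv : deriv (fun t => f (X t)) =ᶠ[𝓝 s] fun t => ∑ a, pd a f (X t) * velocity X t a := by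
    filter_upwards [hI.mem_nhds hs] with t ht
    rw [(hasDerivAt_comp_velocity (hfd hf t ht) (hXd t ht)).deriv, fderiv_apply_eq_sum_pd]
  refine HasDerivAt.congr_of_eventuallyEq ?_ hderiv
  convert HasDerivAt.fun_sum (u := Finset.univ) fun a _ =>
    (hasDerivAt_comp_velocity (hfd (hf.contDiffOn_pd hU a) s hs) (hXd s hs)).fun_mul (hv a) using 1
  simp only [fderiv_apply_eq_sum_pd, dotProduct, mulVec, hess, of_apply, Finset.sum_add_distrib,
    Finset.mul_sum, Finset.sum_mul]
  rw [Finset.sum_comm]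
  congr 1
  exact Finset.sum_congr rfl fun _ _ => Finset.sum_congr rfl fun _ _ => by ring

variable {φ : (Fin n → ℝ) → Fin n → ℝ} {ξ : ℝ → Fin n → ℝ}

theorem velocity_jac_mulVec (hU : IsOpen U) (hI : IsOpen I) (hφ : ContDiffOn ℝ ∞ φ U)
    (hX : ContDiffOn ℝ ∞ X I) (hξ : ContDiffOn ℝ ∞ ξ I) (hXU : ∀ t ∈ I, X t ∈ U) (hs : s ∈ I)
    (hH : ∀ κ, hess (fun y => φ y κ) (X s) = 0) :
    velocity (fun t => jac φ (X t) *ᵥ ξ t) s = jac φ (X s) *ᵥ velocity ξ s := by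
  funext μ
  have hJ : ∀ ρ, HasDerivAt (fun t => jac φ (X t) μ ρ) 0 s := fun ρ => by
    have h := hasDerivAt_comp_velocity (f := pd ρ fun y => φ y μ)
      ((((contDiffOn_pi.mp hφ μ).contDiffOn_pd hU ρ).contDiffAt
        (hU.mem_nhds (hXU s hs))).differentiableAt (by simp))
      ((hX.contDiffAt (hI.mem_nhds hs)).differentiableAt (by simp))
    rwa [fderiv_pd_eq_zero_of_hess_eq_zero (hH μ), _root_.zero_apply] at h
  have hξc : ∀ ρ, HasDerivAt (fun t => ξ t ρ) (velocity ξ s ρ) s := fun ρ =>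
    (((contDiffOn_pi.mp hξ ρ).contDiffAt (hI.mem_nhds hs)).differentiableAt (by simp)).hasDerivAt
  have hsum := HasDerivAt.fun_sum (u := Finset.univ) fun ρ _ => (hJ ρ).fun_mul (hξc ρ)
  simp only [zero_mul, zero_add] at hsum
  exact hsum.deriv

theorem deriv_deriv_jac_mulVec (hU : IsOpen U) (hI : IsOpen I) (hφ : ContDiffOn ℝ ∞ φ U)
    (hX : ContDiffOn ℝ ∞ X I) (hξ : ContDiffOn ℝ ∞ ξ I) (hXU : ∀ t ∈ I, X t ∈ U) (hs : s ∈ I)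
    (hH : ∀ κ, hess (fun y => φ y κ) (X s) = 0) (μ : Fin n) :
    deriv (deriv fun t => (jac φ (X t) *ᵥ ξ t) μ) s
      = velocity X s ⬝ᵥ ((∑ ρ, ξ s ρ • hess (pd ρ fun y => φ y μ) (X s)) *ᵥ velocity X s)
        + ∑ ρ, jac φ (X s) μ ρ * deriv (deriv fun t => ξ t ρ) s := by
  have hJ : ∀ ρ, ContDiffOn ℝ ∞ (pd ρ fun y => φ y μ) U := fun ρ =>
    (contDiffOn_pi.mp hφ μ).contDiffOn_pd hU ρ
  have hJX : ∀ ρ, ∀ t ∈ I, HasDerivAt (fun t => jac φ (X t) μ ρ)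
      (fderiv ℝ (pd ρ fun y => φ y μ) (X t) (velocity X t)) t := fun ρ t ht =>
    hasDerivAt_comp_velocity (((hJ ρ).contDiffAt (hU.mem_nhds (hXU t ht))).differentiableAt
      (by simp)) ((hX.contDiffAt (hI.mem_nhds ht)).differentiableAt (by simp))
  have hJX' : ∀ ρ, deriv (fun t => jac φ (X t) μ ρ) s = 0 := fun ρ => by
    rw [(hJX ρ s hs).deriv, fderiv_pd_eq_zero_of_hess_eq_zero (hH μ), _root_.zero_apply]
  have hξc : ∀ ρ, ∀ t ∈ I, DifferentiableAt ℝ (fun t => ξ t ρ) t := fun ρ t ht =>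
    ((contDiffOn_pi.mp hξ ρ).contDiffAt (hI.mem_nhds ht)).differentiableAt (by simp)
  have hξ₂ : ∀ ρ, HasDerivAt (deriv fun t => ξ t ρ) (deriv (deriv fun t => ξ t ρ) s) s := fun ρ =>
    ((((contDiffOn_pi.mp hξ ρ).deriv_of_isOpen (m := 1) hI (by norm_cast)).contDiffAt
      (hI.mem_nhds hs)).differentiableAt (by simp)).hasDerivAt
  have hsum : (deriv fun t => (jac φ (X t) *ᵥ ξ t) μ)
      =ᶠ[𝓝 s] fun t => ∑ ρ, deriv (fun t => jac φ (X t) μ ρ * ξ t ρ) t := by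
    filter_upwards [hI.mem_nhds hs] with t ht
    exact deriv_fun_sum (u := Finset.univ) (A := fun ρ t => jac φ (X t) μ ρ * ξ t ρ)
      fun ρ _ => (hJX ρ t ht).differentiableAt.fun_mul (hξc ρ t ht)
  rw [hsum.deriv_eq]
  refine (HasDerivAt.fun_sum (u := Finset.univ) fun ρ _ => hasDerivAt_deriv_mul
    (Filter.eventually_of_mem (hI.mem_nhds hs) fun t ht => (hJX ρ t ht).differentiableAt)
    (Filter.eventually_of_mem (hI.mem_nhds hs) (hξc ρ))
    (hasDerivAt_deriv_comp (hJ ρ) hU hX hI hXU hs) (hξ₂ ρ)).deriv.trans ?_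
  simp only [fderiv_pd_eq_zero_of_hess_eq_zero (hH μ), _root_.zero_apply, add_zero, hJX', zero_mul,
    mul_zero]
  rw [Finset.sum_add_distrib, sum_mulVec, dotProduct_sum]
  congr 1
  exact Finset.sum_congr rfl fun ρ _ => by rw [smul_mulVec, dotProduct_smul, smul_eq_mul, mul_comm]

end Curve

theorem genJacobiOp_eq (Γ : (Fin n → ℝ) → Fin n → Fin n → Fin n → ℝ) (X ξ : ℝ → Fin n → ℝ)
    (μ : Fin n) (s : ℝ) :
    genJacobiOp Γ X ξ μ s = deriv (deriv fun t => ξ t μ) s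
      + velocity ξ s ⬝ᵥ (of (Γ (X s) μ) *ᵥ (2 • velocity X s + velocity ξ s))
      + (velocity X s + velocity ξ s) ⬝ᵥ ((∑ α, ξ s α • pdMat α (fun x => of (Γ x μ)) (X s))
          *ᵥ (velocity X s + velocity ξ s)) := by
  simp only [genJacobiOp, dotProduct_mulVec_eq_sum_sum, Matrix.sum_apply, Matrix.smul_apply,
    pdMat, of_apply, Pi.add_apply, Pi.smul_apply, smul_eq_mul, velocity, Finset.sum_mul]
  congr 1
  · exact congrArg _ (Finset.sum_congr rfl fun _ _ => Finset.sum_congr rfl fun _ _ => by ring)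
  · exact Finset.sum_congr rfl fun _ _ => Finset.sum_congr rfl fun _ _ =>
      Finset.sum_congr rfl fun _ _ => by ring

theorem genJacobiOp_transform {U : Set (Fin n → ℝ)} {I : Set ℝ}
    {Γ Γt : (Fin n → ℝ) → Fin n → Fin n → Fin n → ℝ} {φ : (Fin n → ℝ) → Fin n → ℝ}
    {X ξ : ℝ → Fin n → ℝ} {s : ℝ} (hU : IsOpen U)
    (hΓ : ∀ μ ν σ, ContDiffOn ℝ ∞ (fun x => Γ x μ ν σ) U) (hI : IsOpen I)
    (hX : ContDiffOn ℝ ∞ X I) (hξ : ContDiffOn ℝ ∞ ξ I) (hXU : ∀ t ∈ I, X t ∈ U)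
    (hφ : IsDiffeoOn φ U) (hΓt : TransformedConn U φ Γ Γt) (hs : s ∈ I)
    (hH : ∀ κ, hess (fun y => φ y κ) (X s) = 0) (μ : Fin n) :
    genJacobiOp Γt (fun t => φ (X t)) (fun t => jac φ (X t) *ᵥ ξ t) μ s
      = ∑ c, jac φ (X s) μ c * genJacobiOp Γ X ξ c s
        + (velocity X s ⬝ᵥ ((∑ τ, ξ s τ • pdMat τ (hess fun y => φ y μ) (X s)) *ᵥ velocity X s)
          - (velocity X s + velocity ξ s) ⬝ᵥ ((∑ τ, ξ s τ • pdMat τ (hess fun y => φ y μ) (X s))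
              *ᵥ (velocity X s + velocity ξ s))) := by
  have hpU := hXU s hs
  have hφd : DifferentiableAt ℝ φ (X s) :=
    (hφ.1.contDiffAt (hU.mem_nhds hpU)).differentiableAt (by simp)
  have hΓtd : ∀ a b, DifferentiableAt ℝ (fun y => Γt y μ a b) (φ (X s)) := fun a b =>
    ((hΓt.contDiffOn hU hΓ hφ μ a b).contDiffAt
      (hφ.2.1.mem_nhds ⟨X s, hpU, rfl⟩)).differentiableAt (by simp)
  have hlaw := hΓt.jac_transpose_mul_mul_jac hpU μ
  have hdlaw := hΓt.jac_transpose_mul_pdMat_mul_jac hU hΓ hφ.1 hpU μ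
    (fun a b => (hΓtd a b).comp (X s) hφd) hH
  rw [hH μ, sub_zero] at hlaw
  have hXd : DifferentiableAt ℝ X s := (hX.contDiffAt (hI.mem_nhds hs)).differentiableAt (by simp)
  rw [genJacobiOp_eq, velocity_comp hφd hXd,
    velocity_jac_mulVec hU hI hφ.1 hX hξ hXU hs hH,
    deriv_deriv_jac_mulVec hU hI hφ.1 hX hξ hXU hs hH, ← mulVec_smul, ← mulVec_add, ← mulVec_add,
    sum_jac_mulVec_smul_pdMat (M := fun x => of (Γt x μ)) hΓtd hφd, mulVec_dotProduct_mulVec_mulVec,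
    mulVec_dotProduct_mulVec_mulVec, hlaw]
  simp only [genJacobiOp_eq, (contDiffOn_pi.mp hφ.1 μ).hess_pd hU hpU, Matrix.mul_sum,
    Matrix.sum_mul, Matrix.mul_smul, Matrix.smul_mul, hdlaw]
  have hswap : ∀ T : Fin n → Fin n → Matrix (Fin n) (Fin n) ℝ,
      ∑ τ, ξ s τ • ∑ c, jac φ (X s) μ c • T τ c = ∑ c, jac φ (X s) μ c • ∑ τ, ξ s τ • T τ c := by
    intro T
    simp only [Finset.smul_sum]
    rw [Finset.sum_comm]
    simp only [smul_comm (ξ s _)]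
  simp only [smul_sub, Finset.sum_sub_distrib, hswap, sum_mulVec, smul_mulVec, sub_mulVec,
    dotProduct_sum, dotProduct_smul, dotProduct_sub, smul_eq_mul, mul_add, Finset.sum_add_distrib]
  ring

end

theorem genJacobiOp_transform_third_derivative_general
    {n : ℕ} (U : Set (Fin n → ℝ)) (hU : IsOpen U)
    (Γ : (Fin n → ℝ) → Fin n → Fin n → Fin n → ℝ) (hΓ : IsConnCoeff U Γ)
    (I : Set ℝ) (hIopen : IsOpen I)
    (X : ℝ → Fin n → ℝ) (hXU : ∀ s ∈ I, X s ∈ U) (hXsm : ContDiffOn ℝ ∞ X I)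
    (s₀ : ℝ) (hs₀ : s₀ ∈ I)
    (ξ : ℝ → Fin n → ℝ) (hξsm : ContDiffOn ℝ ∞ ξ I) (hξ : IsGenJacobiField Γ I X ξ)
    (φ : (Fin n → ℝ) → Fin n → ℝ) (hφ : IsDiffeoOn φ U)
    (hφ2 : ∀ μ ν σ : Fin n, pd ν (fun y => pd σ (fun z => φ z μ) y) (X s₀) = 0)
    (Γt : (Fin n → ℝ) → Fin n → Fin n → Fin n → ℝ)
    (hΓt : TransformedConn U φ Γ Γt) :
    ∀ μ : Fin n,
      genJacobiOp Γt (fun s => φ (X s))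
          (fun s ν => ∑ ρ, pd ρ (fun y => φ y ν) (X s) * ξ s ρ) μ s₀
        = - ∑ τ, ∑ ρ, ∑ σ,
            pd τ (fun x => pd ρ (fun y => pd σ (fun z => φ z μ) y) x) (X s₀)
              * ξ s₀ τ
              * (2 * deriv (fun t => X t ρ) s₀ + deriv (fun t => ξ t ρ) s₀)
              * deriv (fun t => ξ t σ) s₀ := by
  intro μ
  have hH : ∀ κ, hess (fun y => φ y κ) (X s₀) = 0 := fun κ => by ext ν σ; exact hφ2 κ ν σ
  have hT := (contDiffOn_pi.mp hφ.1 μ).isSymm_pdMat_hess hU (hXU s₀ hs₀)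
  change genJacobiOp Γt (fun t => φ (X t)) (fun t => jac φ (X t) *ᵥ ξ t) μ s₀ = _
  rw [genJacobiOp_transform hU hΓ.1 hIopen hXsm hξsm hXU hφ hΓt hs₀ hH,
    Finset.sum_eq_zero fun c _ => by rw [hξ s₀ hs₀ c, mul_zero], zero_add]
  simp only [sum_mulVec, smul_mulVec, dotProduct_sum, dotProduct_smul, smul_eq_mul,
    ← Finset.sum_sub_distrib, ← mul_sub]
  simp only [fun τ => (hT τ).dotProduct_mulVec_sub_add]
  simp only [dotProduct_mulVec_eq_sum_sum, ← Finset.sum_neg_distrib, Finset.mul_sum]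
  refine Finset.sum_congr rfl fun _ _ => Finset.sum_congr rfl fun _ _ =>
    Finset.sum_congr rfl fun _ _ => ?_
  simp only [pdMat, hess, velocity, of_apply, Pi.add_apply, Pi.smul_apply]
  ring

/-- If all second partial derivatives of the diffeomorphism `φ` vanish at
`p = X s₀`, then the generalized Jacobi operator of the transformed connection applied to the
tensorially transformed field `ξ̃ s = Dφ(X s) (ξ s)` of a generalized Jacobi field `ξ` equals,
at `s₀`, `−(∂³φ^μ/∂x^τ∂x^ρ∂x^σ)(p) ξ^τ (2Ẋ^ρ + ξ̇^ρ) ξ̇^σ`. -/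
theorem genJacobiOp_transform_third_derivative
    {n : ℕ} (hn : 2 ≤ n) (U : Set (Fin n → ℝ)) (hU : IsOpen U)
    (Γ : (Fin n → ℝ) → Fin n → Fin n → Fin n → ℝ) (hΓ : IsConnCoeff U Γ)
    (I : Set ℝ) (hIopen : IsOpen I) (hIint : I.OrdConnected)
    (X : ℝ → Fin n → ℝ) (hXU : ∀ s ∈ I, X s ∈ U) (hXsm : ContDiffOn ℝ ∞ X I)
    (hXgeo : IsGeodesic Γ I X)
    (s₀ : ℝ) (hs₀ : s₀ ∈ I)
    (ξ : ℝ → Fin n → ℝ) (hξsm : ContDiffOn ℝ ∞ ξ I) (hξ : IsGenJacobiField Γ I X ξ)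
    (φ : (Fin n → ℝ) → Fin n → ℝ) (hφ : IsDiffeoOn φ U)
    (hφ2 : ∀ μ ν σ : Fin n, pd ν (fun y => pd σ (fun z => φ z μ) y) (X s₀) = 0)
    (Γt : (Fin n → ℝ) → Fin n → Fin n → Fin n → ℝ)
    (hΓt : TransformedConn U φ Γ Γt) :
    ∀ μ : Fin n,
      genJacobiOp Γt (fun s => φ (X s))
          (fun s ν => ∑ ρ, pd ρ (fun y => φ y ν) (X s) * ξ s ρ) μ s₀
        = - ∑ τ, ∑ ρ, ∑ σ,
            pd τ (fun x => pd ρ (fun y => pd σ (fun z => φ z μ) y) x) (X s₀)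
              * ξ s₀ τ
              * (2 * deriv (fun t => X t ρ) s₀ + deriv (fun t => ξ t ρ) s₀)
              * deriv (fun t => ξ t σ) s₀ :=
  genJacobiOp_transform_third_derivative_general U hU Γ hΓ I hIopen X hXU hXsm s₀ hs₀ ξ hξsm hξ φ hφ
    hφ2 Γt hΓt
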